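/- arXiv:math/0701445 — 2 statements merged into one kernel-verified Lean document; each statement's English description precedes it below -/
import Mathlib

section
/- Let A = E(1) ⊗ E(n-1)^{r-1} with generators e₀ (from E(1)) and e₁,…,e_{n-1} (from the truncated exterior algebra, truncated above degree r-1), where n > r > 1. Set ē_i = 1⊗e_i − e_i⊗1 in A ⊗ A (with the sign-twisted multiplication). Let k = min{n-1, 2r-2} and let J ⊆ {1,…,n-1} with |J| = k. Then the product ē₀ ∏_{i∈J} ē_i is nonzero in A ⊗ A. -/
open ExteriorAlgebra

/-! Let `A = E(1) ⊗ E(n-1)^{r-1}` be the Koszul-signed graded tensor product of the exterior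
algebra on one degree-one generator `e₀` with the exterior algebra on `n-1` degree-one
generators `e₁, …, e_{n-1}` truncated above degree `r-1`.  Since the Koszul tensor product of
exterior algebras is the exterior algebra on the direct sum of the generating spaces, both `A`
and its Koszul tensor square `A ⊗ A` have canonical presentations as quotients of exterior
algebras: `A ⊗ A` is the exterior algebra on two copies (indexed by `b : Fin 2`, where `b = 0`
is the left tensor factor and `b = 1` the right one) of the generators `e₀, …, e_{n-1}`,
modulo the two-sided ideal generated by the degree-`r` monomials in `e₁, …, e_{n-1}` of each
copy.  Under this identification `x ⊗ y` corresponds to `x⁽⁰⁾ · y⁽¹⁾`. -/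

/-- The exterior algebra on two copies of the `n` generators. -/
abbrev ExtAlg2 (n : ℕ) : Type := ExteriorAlgebra ℂ (Fin 2 × Fin n → ℂ)

/-- The generator `e_i` of the copy `b` (`b = 0`: left factor `e_i ⊗ 1`;
`b = 1`: right factor `1 ⊗ e_i`). -/
noncomputable def bgen (n : ℕ) (b : Fin 2) (i : Fin n) : ExtAlg2 n :=
  ι ℂ (Pi.single (b, i) 1)

/-- The monomial `e_S` in the generators of the copy `b`, in increasing order. -/
noncomputable def bProd (n : ℕ) (b : Fin 2) (S : Finset (Fin n)) : ExtAlg2 n :=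
  ((S.sort (· ≤ ·)).map (bgen n b)).prod

/-- The relation killing the degree-`r` monomials in `e₁, …, e_{n-1}` of each copy:
the truncation of each tensor factor of `A ⊗ A` above degree `r-1`. -/
def A2Rel (n r : ℕ) : ExtAlg2 n → ExtAlg2 n → Prop :=
  fun x y => y = 0 ∧ ∃ (b : Fin 2) (S : Finset (Fin n)),
    (∀ i ∈ S, (i : ℕ) ≠ 0) ∧ S.card = r ∧ x = bProd n b S

/-- `A ⊗ A` with the sign-twisted multiplication, in its canonical presentation. -/
abbrev A2 (n r : ℕ) : Type := RingQuot (A2Rel n r)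

/-- The quotient map onto `A ⊗ A`. -/
noncomputable def a2mk (n r : ℕ) : ExtAlg2 n →ₐ[ℂ] A2 n r :=
  RingQuot.mkAlgHom ℂ (A2Rel n r)

/-- `ē_i = 1⊗e_i − e_i⊗1` in `A ⊗ A`. -/
noncomputable def ebar (n r : ℕ) (i : Fin n) : A2 n r :=
  a2mk n r (bgen n 1 i) - a2mk n r (bgen n 0 i)

/-! Split `J = T ∪ (J \ T)` with `|T|, |J \ T| ≤ r - 1`, which `|J| ≤ 2r - 2` allows. In the
exterior algebra on the `2n` generators `e_i ⊗ 1`, `1 ⊗ e_i`, keep `e_i ⊗ 1` (with a sign) for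
`i ∈ T` and `1 ⊗ e_i` for the other `i ∈ J ∪ {0}`, and send every other generator to `0`. This
kills each degree-`r` monomial in `e₁, …, e_{n-1}` of either copy, since such a monomial must use
a generator sent to `0`, so it factors through `A ⊗ A`. There it sends `ē₀ ∏ ē_i` to a product of
distinct basis vectors, which is nonzero. -/

open Finset

namespace ExteriorAlgebra

variable {R I : Type*} [CommRing R] [Nontrivial R] [DecidableEq I]

/-- The determinant of the `p`-coordinates is an alternating form equal to `1` on this family. -/
theorem ιMulti_single_ne_zero {m : ℕ} {p : Fin m → I} (hp : Function.Injective p) :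
    ιMulti R m (fun j => (Pi.single (p j) (1 : R) : I → R)) ≠ 0 := by
  intro h
  let D := (Pi.basisFun R (Fin m)).det.compLinearMap (LinearMap.funLeft R R p)
  have hD := congrArg (liftAlternating (Function.update 0 m D)) h
  rw [liftAlternating_apply_ιMulti, map_zero, Function.update_self,
    AlternatingMap.compLinearMap_apply] at hD
  have hbasis :
      (fun j => LinearMap.funLeft R R p (Pi.single (p j) 1)) = Pi.basisFun R (Fin m) := by
    ext j k
    simp [Pi.single_apply, hp.eq_iff, eq_comm]
  rw [hbasis, Module.Basis.det_self] at hD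
  exact one_ne_zero hD

theorem list_prod_ι_single_ne_zero {l : List I} (hl : l.Nodup) :
    (l.map fun q => ι R (Pi.single q (1 : R))).prod ≠ 0 := by
  simpa [ιMulti_apply, List.ofFn_getElem_eq_map l fun q => ι R (Pi.single q (1 : R))] using
    ιMulti_single_ne_zero (R := R) (List.nodup_iff_injective_get.mp hl)

end ExteriorAlgebra

theorem Finset.exists_subset_card_le_sdiff_card_le {α : Type*} [DecidableEq α] (s : Finset α)
    {m : ℕ} (hs : #s ≤ 2 * m) : ∃ t ⊆ s, #t ≤ m ∧ #(s \ t) ≤ m := by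
  obtain ⟨t, hts, ht⟩ := exists_subset_card_eq (min_le_left #s m)
  exact ⟨t, hts, ht ▸ min_le_right _ _, by rw [card_sdiff_of_subset hts]; omega⟩

section SideProjection

variable {n r : ℕ} (U : Finset (Fin n)) (σ : Fin n → Fin 2)

/-- Keeps, for `i ∈ U`, only the generator `e_i` of the copy `σ i`; the sign on the left copy
makes `ē_i` go to that generator itself. -/
def sideWeight (q : Fin 2 × Fin n) : ℂ :=
  if q.2 ∈ U ∧ σ q.2 = q.1 then (if q.1 = 1 then 1 else -1) else 0

noncomputable def sideProj : ExtAlg2 n →ₐ[ℂ] ExtAlg2 n :=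
  ExteriorAlgebra.map (LinearMap.mulLeft ℂ (sideWeight U σ))

theorem sideProj_bgen (b : Fin 2) (i : Fin n) :
    sideProj U σ (bgen n b i) = sideWeight U σ (b, i) • bgen n b i := by
  rw [sideProj, bgen, map_apply_ι, LinearMap.mulLeft_apply, ← Pi.single_mul_right, mul_one,
    ← map_smul, ← Pi.single_smul', smul_eq_mul, mul_one]

variable {U σ}

theorem sideProj_respects (hσ : ∀ b, #{i ∈ U | σ i = b ∧ (i : ℕ) ≠ 0} < r)
    ⦃x y : ExtAlg2 n⦄ (h : A2Rel n r x y) : sideProj U σ x = sideProj U σ y := by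
  obtain ⟨rfl, b, S, hS0, rfl, rfl⟩ := h
  obtain ⟨i, hiS, hi⟩ : ∃ i ∈ S, ¬(i ∈ U ∧ σ i = b) := by
    by_contra! hsub
    exact (card_le_card fun i hi => by simp [hsub i hi, hS0 i hi]).not_gt (hσ b)
  rw [map_zero, bProd, map_list_prod, List.map_map]
  exact List.prod_eq_zero (List.mem_map.2
    ⟨i, (mem_sort _).2 hiS, by simp [sideProj_bgen, sideWeight, hi]⟩)

noncomputable def sideProjA2 (hσ : ∀ b, #{i ∈ U | σ i = b ∧ (i : ℕ) ≠ 0} < r) :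
    A2 n r →ₐ[ℂ] ExtAlg2 n :=
  RingQuot.liftAlgHom ℂ ⟨sideProj U σ, sideProj_respects hσ⟩

theorem sideProjA2_ebar (hσ : ∀ b, #{i ∈ U | σ i = b ∧ (i : ℕ) ≠ 0} < r) {i : Fin n}
    (hi : i ∈ U) : sideProjA2 hσ (ebar n r i) = bgen n (σ i) i := by
  simp only [sideProjA2, ebar, a2mk, map_sub, RingQuot.liftAlgHom_mkAlgHom_apply, sideProj_bgen,
    sideWeight, hi, true_and]
  obtain h | h : σ i = 0 ∨ σ i = 1 := by omega
  all_goals simp [h]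

end SideProjection

/-- let `k = min{n-1, 2r-2}` and `J ⊆ {1,…,n-1}` with `|J| = k` (`n > r > 1`).
Then `ē₀ ∏_{i∈J} ē_i ≠ 0` in `A ⊗ A`. -/
theorem ebar_prod_ne_zero (n r : ℕ) (hr : 1 < r) (hrn : r < n)
    (J : Finset (Fin n)) (hJ0 : ∀ i ∈ J, (i : ℕ) ≠ 0)
    (hJcard : J.card = min (n - 1) (2 * r - 2)) :
    ebar n r ⟨0, by omega⟩ * ((J.sort (· ≤ ·)).map (ebar n r)).prod ≠ 0 := by
  set i₀ : Fin n := ⟨0, by omega⟩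
  obtain ⟨T, hTJ, hT, hJT⟩ := J.exists_subset_card_le_sdiff_card_le (m := r - 1) (by omega)
  let σ : Fin n → Fin 2 := fun i => if i ∈ T then 0 else 1
  have hσ : ∀ b, #{i ∈ insert i₀ J | σ i = b ∧ (i : ℕ) ≠ 0} < r := by
    refine Fin.forall_fin_two.2 ⟨(card_le_card fun i hi => ?_).trans_lt (by omega : #T < r),
      (card_le_card fun i hi => ?_).trans_lt (by omega : #(J \ T) < r)⟩
    all_goals simp only [mem_filter, mem_insert, mem_sdiff, σ, i₀, Fin.ext_iff] at hi ⊢; aesop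
  have hl : (i₀ :: J.sort (· ≤ ·)).Nodup :=
    List.nodup_cons.2 ⟨fun h => hJ0 i₀ ((J.mem_sort _).1 h) rfl, J.sort_nodup _⟩
  intro h
  have h' := congrArg (sideProjA2 hσ) h
  rw [map_mul, map_list_prod, List.map_map, map_zero, sideProjA2_ebar hσ (mem_insert_self _ _),
    List.map_congr_left (f := sideProjA2 hσ ∘ ebar n r) fun i hi =>
      sideProjA2_ebar hσ (mem_insert_of_mem ((J.mem_sort _).1 hi))] at h'
  have hinj : Function.Injective fun i => (σ i, i) :=
    Function.LeftInverse.injective (g := Prod.snd) fun _ => rfl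
  refine list_prod_ι_single_ne_zero (R := ℂ) (hl.map hinj) ?_
  simpa [bgen, Function.comp_def] using h'
end

section
/- In the graded tensor square A ⊗ A of A = E(1) ⊗ E(n-1)^{r-1} (n > r > 1), the zero-divisor-cup-length of A is at least min{n, 2r-1}: there exist min{n, 2r-1} elements of the kernel of the multiplication map A ⊗ A → A whose product is nonzero. -/
open ExteriorAlgebra

/-- The generator `e_i` of `E(n)`. -/
noncomputable def gen (n : ℕ) (i : Fin n) : ExteriorAlgebra ℂ (Fin n → ℂ) :=
  ι ℂ (Pi.single i 1)

/-- The monomial `e_S` in `E(n)`, in increasing order. -/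
noncomputable def eProd (n : ℕ) (S : Finset (Fin n)) : ExteriorAlgebra ℂ (Fin n → ℂ) :=
  ((S.sort (· ≤ ·)).map (gen n)).prod

/-- The relation presenting `A = E(1) ⊗ E(n-1)^{r-1}` as a quotient of `E(n)`:
kill the degree-`r` monomials in `e₁, …, e_{n-1}`. -/
def ARel (n r : ℕ) : ExteriorAlgebra ℂ (Fin n → ℂ) → ExteriorAlgebra ℂ (Fin n → ℂ) → Prop :=
  fun x y => y = 0 ∧ ∃ S : Finset (Fin n), (∀ i ∈ S, (i : ℕ) ≠ 0) ∧ S.card = r ∧ x = eProd n S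

/-- `A = E(1) ⊗ E(n-1)^{r-1}`. -/
abbrev AAlg (n r : ℕ) : Type := RingQuot (ARel n r)

/-- The quotient map `E(n) → A`. -/
noncomputable def amk (n r : ℕ) : ExteriorAlgebra ℂ (Fin n → ℂ) →ₐ[ℂ] AAlg n r :=
  RingQuot.mkAlgHom ℂ (ARel n r)

/-- The linear map folding the two copies of the generating space onto one,
`v ↦ (i ↦ v(0,i) + v(1,i))`. -/
noncomputable def fold (n : ℕ) : (Fin 2 × Fin n → ℂ) →ₗ[ℂ] (Fin n → ℂ) :=
  LinearMap.funLeft ℂ ℂ (Prod.mk 0) + LinearMap.funLeft ℂ ℂ (Prod.mk 1)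

lemma fold_single (n : ℕ) (b : Fin 2) (i : Fin n) :
    fold n (Pi.single (b, i) 1) = Pi.single i 1 := by
  funext j
  fin_cases b <;> simp [fold, LinearMap.funLeft, Pi.single_apply, Prod.ext_iff]

lemma map_fold_bProd (n : ℕ) (b : Fin 2) (S : Finset (Fin n)) :
    (ExteriorAlgebra.map (fold n)) (bProd n b S) = eProd n S := by
  rw [bProd, map_list_prod, List.map_map, eProd]
  congr 1
  refine List.map_congr_left fun i _ => ?_
  simp [bgen, gen, Function.comp, ExteriorAlgebra.map_apply_ι, fold_single]

/-- The multiplication map `μ : A ⊗ A → A`, the algebra homomorphism sending `x ⊗ y` to `xy`,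
i.e. sending both copies of each generator to that generator. -/
noncomputable def mulMap (n r : ℕ) : A2 n r →ₐ[ℂ] AAlg n r :=
  RingQuot.liftAlgHom ℂ (s := A2Rel n r) ⟨(amk n r).comp (ExteriorAlgebra.map (fold n)), by
    rintro x y ⟨rfl, b, S, hS0, hScard, rfl⟩
    simp only [AlgHom.comp_apply, map_zero, map_fold_bProd]
    have h := RingQuot.mkAlgHom_rel ℂ (s := ARel n r)
      (show ARel n r (eProd n S) 0 from ⟨rfl, S, hS0, hScard, rfl⟩)
    simpa [amk, map_fold_bProd] using h⟩

-- Auxiliary development (to be appended before the theorem)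

/-- Coefficient-masking linear map: keeps copy-0 generators with index `< r` and
copy-1 generators with index in `[r, 2r-1)`. -/
noncomputable def gmap (n r : ℕ) : (Fin 2 × Fin n → ℂ) →ₗ[ℂ] (Fin n → ℂ) :=
  LinearMap.pi fun j =>
    (if (j : ℕ) < r then (LinearMap.proj ((0 : Fin 2), j) : (Fin 2 × Fin n → ℂ) →ₗ[ℂ] ℂ) else 0) +
    (if r ≤ (j : ℕ) ∧ (j : ℕ) < 2 * r - 1 then (LinearMap.proj ((1 : Fin 2), j) : (Fin 2 × Fin n → ℂ) →ₗ[ℂ] ℂ) else 0)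

lemma gmap_single0 (n r : ℕ) (i : Fin n) :
    gmap n r (Pi.single ((0 : Fin 2), i) 1) =
      if (i : ℕ) < r then Pi.single i 1 else 0 := by
  funext j
  simp only [gmap, LinearMap.pi_apply, LinearMap.add_apply, apply_ite (fun f : _ →ₗ[ℂ] ℂ => f (Pi.single ((0 : Fin 2), i) 1)), LinearMap.proj_apply, LinearMap.zero_apply]
  rcases eq_or_ne i j with rfl | h
  · split_ifs <;> simp
  · split_ifs <;> simp [Pi.single_apply, Prod.ext_iff, h.symm]

lemma gmap_single1 (n r : ℕ) (i : Fin n) :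
    gmap n r (Pi.single ((1 : Fin 2), i) 1) =
      if r ≤ (i : ℕ) ∧ (i : ℕ) < 2 * r - 1 then Pi.single i 1 else 0 := by
  funext j
  simp only [gmap, LinearMap.pi_apply, LinearMap.add_apply, apply_ite (fun f : _ →ₗ[ℂ] ℂ => f (Pi.single ((1 : Fin 2), i) 1)), LinearMap.proj_apply, LinearMap.zero_apply]
  rcases eq_or_ne i j with rfl | h
  · split_ifs <;> simp
  · split_ifs <;> simp [Pi.single_apply, Prod.ext_iff, h.symm]

/-- The induced map on exterior algebras. -/
noncomputable def psi (n r : ℕ) : ExtAlg2 n →ₐ[ℂ] ExteriorAlgebra ℂ (Fin n → ℂ) :=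
  ExteriorAlgebra.map (gmap n r)

lemma psi_bgen (n r : ℕ) (b : Fin 2) (i : Fin n) :
    psi n r (bgen n b i) = ι ℂ (gmap n r (Pi.single (b, i) 1)) := by
  simp [psi, bgen, ExteriorAlgebra.map_apply_ι]

lemma card_aux (n : ℕ) {a c : ℕ} (S : Finset (Fin n))
    (h : ∀ i ∈ S, a ≤ (i : ℕ) ∧ (i : ℕ) < c) : S.card ≤ c - a := by
  have h1 : S.image Fin.val ⊆ Finset.Ico a c := by
    intro x hx
    simp only [Finset.mem_image] at hx
    obtain ⟨i, hi, rfl⟩ := hx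
    exact Finset.mem_Ico.2 (h i hi)
  have h2 := Finset.card_le_card h1
  rwa [Finset.card_image_of_injective _ Fin.val_injective, Nat.card_Ico] at h2

lemma psi_rel (n r : ℕ) (hr : 0 < r) :
    ∀ ⦃x y⦄, A2Rel n r x y → psi n r x = psi n r y := by
  rintro x y ⟨rfl, b, S, hS0, hScard, rfl⟩
  rw [map_zero, bProd, map_list_prod, List.map_map]
  apply List.prod_eq_zero
  have hex : ∃ i ∈ S, psi n r (bgen n b i) = 0 := by
    by_contra hc
    push_neg at hc
    fin_cases b
    · have hb : ∀ i ∈ S, 1 ≤ (i : ℕ) ∧ (i : ℕ) < r := by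
        intro i hi
        refine ⟨Nat.one_le_iff_ne_zero.2 (hS0 i hi), ?_⟩
        by_contra hge
        refine hc i hi ?_
        show psi n r (bgen n 0 i) = 0
        rw [psi_bgen, gmap_single0, if_neg hge, map_zero]
      have := card_aux n S hb
      omega
    · have hb : ∀ i ∈ S, r ≤ (i : ℕ) ∧ (i : ℕ) < 2 * r - 1 := by
        intro i hi
        by_contra hge
        refine hc i hi ?_
        show psi n r (bgen n 1 i) = 0
        rw [psi_bgen, gmap_single1, if_neg hge, map_zero]
      have := card_aux n S hb
      omega
  obtain ⟨i, hi, hzero⟩ := hex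
  exact List.mem_map.2 ⟨i, by simpa using hi, hzero⟩

/-- The induced map on `A ⊗ A`. -/
noncomputable def Phi (n r : ℕ) (hr : 0 < r) :
    A2 n r →ₐ[ℂ] ExteriorAlgebra ℂ (Fin n → ℂ) :=
  RingQuot.liftAlgHom ℂ ⟨psi n r, psi_rel n r hr⟩

lemma Phi_mk (n r : ℕ) (hr : 0 < r) (x : ExtAlg2 n) :
    Phi n r hr (a2mk n r x) = psi n r x := by
  rw [Phi, a2mk, RingQuot.liftAlgHom_mkAlgHom_apply]

/-- the zero-divisor-cup-length of `A = E(1) ⊗ E(n-1)^{r-1}` (`n > r > 1`) is at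
least `min{n, 2r-1}`: there are `min{n, 2r-1}` elements of the kernel of the multiplication
map `A ⊗ A → A` whose product is nonzero. -/
theorem zero_divisor_cup_length_lower_bound (n r : ℕ) (hr : 1 < r) (hrn : r < n) :
    ∃ z : Fin (min n (2 * r - 1)) → A2 n r,
      (∀ i, mulMap n r (z i) = 0) ∧ (List.ofFn z).prod ≠ 0 := by
  have hr0 : 0 < r := by omega
  have hmn : min n (2 * r - 1) ≤ n := min_le_left _ _
  set m := min n (2 * r - 1) with hm
  set c : Fin m → Fin n := Fin.castLE hmn with hc
  refine ⟨fun i => ebar n r (c i), ?_, ?_⟩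
  · intro i
    show mulMap n r (ebar n r (c i)) = 0
    have key : ∀ b : Fin 2, mulMap n r (a2mk n r (bgen n b (c i))) =
        amk n r (ι ℂ (Pi.single (c i) 1)) := by
      intro b
      rw [a2mk, mulMap, RingQuot.liftAlgHom_mkAlgHom_apply]
      simp [bgen, ExteriorAlgebra.map_apply_ι, fold_single]
    have he : ebar n r (c i) = a2mk n r (bgen n 1 (c i)) - a2mk n r (bgen n 0 (c i)) := rfl
    rw [he, map_sub, key 0, key 1, sub_self]
  · -- the nonzero product
    set u : Fin m → (Fin n → ℂ) := fun i =>
      gmap n r (Pi.single ((1 : Fin 2), c i) 1) - gmap n r (Pi.single ((0 : Fin 2), c i) 1)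
      with hu
    set ε : Fin m → ℂ := fun i => if (i : ℕ) < r then (-1 : ℂ) else 1 with hε
    have huval : ∀ i : Fin m, u i = ε i • (Pi.single (c i) 1 : Fin n → ℂ) := by
      intro i
      have him : (i : ℕ) < 2 * r - 1 := lt_of_lt_of_le i.isLt (min_le_right _ _)
      show gmap n r (Pi.single ((1 : Fin 2), c i) 1) -
          gmap n r (Pi.single ((0 : Fin 2), c i) 1) = ε i • (Pi.single (c i) 1 : Fin n → ℂ)
      rw [gmap_single1, gmap_single0]
      simp only [hc, Fin.coe_castLE]
      by_cases hcase : (i : ℕ) < r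
      · rw [if_neg (by omega), if_pos hcase, hε]
        simp [hcase]
      · rw [if_pos ⟨by omega, him⟩, if_neg hcase, hε]
        simp [hcase]
    have hPhiz : ∀ i : Fin m, Phi n r hr0 (ebar n r (c i)) = ι ℂ (u i) := by
      intro i
      have he : ebar n r (c i) = a2mk n r (bgen n 1 (c i)) - a2mk n r (bgen n 0 (c i)) := rfl
      rw [he, map_sub, Phi_mk, Phi_mk, psi_bgen, psi_bgen, hu, map_sub]
    have hprod : Phi n r hr0 (List.ofFn fun i => ebar n r (c i)).prod = ιMulti ℂ m u := by
      have hfun : (⇑(Phi n r hr0) ∘ fun i => ebar n r (c i)) = fun i => ι ℂ (u i) :=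
        funext hPhiz
      rw [map_list_prod, List.map_ofFn, hfun, ιMulti_apply]
    set D : (Fin n → ℂ) [⋀^Fin m]→ₗ[ℂ] ℂ :=
      (Matrix.detRowAlternating).compLinearMap (LinearMap.funLeft ℂ ℂ c) with hD
    set f : ∀ k, (Fin n → ℂ) [⋀^Fin k]→ₗ[ℂ] ℂ :=
      Function.update (fun _ => 0) m D with hf
    have hrows : (fun i => LinearMap.funLeft ℂ ℂ c (u i)) = Matrix.diagonal ε := by
      funext i j
      rw [LinearMap.funLeft_apply, huval i]
      simp only [Pi.smul_apply, Pi.single_apply, Matrix.diagonal, Matrix.of_apply]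
      have hinj : c j = c i ↔ i = j :=
        ⟨fun h => (Fin.castLE_injective hmn h).symm, fun h => by rw [h]⟩
      split_ifs with h1 h2 h2
      · simp
      · exact absurd (hinj.1 h1) h2
      · exact absurd (hinj.2 h2) h1
      · simp
    have hdet : liftAlternating f (ιMulti ℂ m u) ≠ 0 := by
      rw [liftAlternating_apply_ιMulti, hf, Function.update_self, hD,
        AlternatingMap.compLinearMap_apply]
      show Matrix.detRowAlternating (fun i => LinearMap.funLeft ℂ ℂ c (u i)) ≠ 0
      rw [hrows]
      show Matrix.det (Matrix.diagonal ε) ≠ 0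
      rw [Matrix.det_diagonal]
      refine Finset.prod_ne_zero_iff.2 fun i _ => ?_
      simp only [hε]
      split_ifs <;> norm_num
    intro hp
    apply hdet
    rw [← hprod, hp, map_zero, map_zero]
end
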